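/- arXiv:1606.00714 — 9 statements merged into one kernel-verified Lean document; each statement's English description precedes it below -/
import Mathlib

section
/- If Y is a linear space, A a proper subset of Y, k ∈ Y \ {0}, and φ: Y → ℝ ∪ {±∞} satisfies dom φ = ℝk + A and the sublevel set {y : φ(y) ≤ t} equals tk + A for every real t, then k ∈ -0⁺A (i.e., A - tk ⊆ A for all t ≥ 0) and φ(y) = inf{t ∈ ℝ : y ∈ tk + A} for all y ∈ Y. -/
open Set Pointwise

noncomputable def phiF {Y : Type*} [AddCommGroup Y] [Module ℝ Y] (A : Set Y) (k : Y) (y : Y) : EReal :=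
  sInf ((fun t : ℝ => (t : EReal)) '' {t : ℝ | y - t • k ∈ A})

def recCone {Y : Type*} [AddCommGroup Y] [Module ℝ Y] (A : Set Y) : Set Y :=
  {u | ∀ a ∈ A, ∀ t : ℝ, 0 ≤ t → a + t • u ∈ A}

def algInterior {Y : Type*} [AddCommGroup Y] [Module ℝ Y] (C : Set Y) : Set Y :=
  {x ∈ C | ∀ y : Y, ∃ ε : ℝ, 0 < ε ∧ ∀ t : ℝ, 0 ≤ t → t ≤ ε → x + t • y ∈ C}

theorem stmt_0 {Y : Type*} [AddCommGroup Y] [Module ℝ Y]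
    (A : Set Y) (hAne : A.Nonempty) (hAp : A ≠ Set.univ) (k : Y) (hk : k ≠ 0)
    (φ : Y → EReal)
    (hdom : {y | φ y ≠ ⊤} = {y | ∃ t : ℝ, y - t • k ∈ A})
    (hlev : ∀ t : ℝ, {y | φ y ≤ (t : EReal)} = {y | y - t • k ∈ A}) :
    (∀ a ∈ A, ∀ t : ℝ, 0 ≤ t → a - t • k ∈ A) ∧ ∀ y : Y, φ y = phiF A k y := by
  have hmem : ∀ (y : Y) (t : ℝ), φ y ≤ (t : EReal) ↔ y - t • k ∈ A := by
    intro y t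
    exact Set.ext_iff.1 (hlev t) y
  constructor
  · intro a ha t ht
    have h0 : φ a ≤ ((0 : ℝ) : EReal) := (hmem a 0).2 (by simpa using ha)
    exact (hmem a t).1 (h0.trans (by exact_mod_cast ht))
  · intro y
    apply le_antisymm
    · apply le_sInf
      rintro x ⟨t, ht, rfl⟩
      exact (hmem y t).2 ht
    · by_contra h
      push_neg at h
      obtain ⟨t, h1, h2⟩ := EReal.exists_between_coe_real h
      have : ((t : ℝ) : EReal) ∈ ((fun t : ℝ => (t : EReal)) '' {t : ℝ | y - t • k ∈ A}) :=
        ⟨t, (hmem y t).1 h1.le, rfl⟩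
      exact absurd (sInf_le this) (not_le.2 h2)
end

section
/- Let Y be a topological vector space, A a closed proper subset of Y, and k ∈ -0⁺A \ {0}. Define φ_{A,k}(y) = inf{t ∈ ℝ : y ∈ tk + A}. Then for every t ∈ ℝ, the sublevel set {y : φ_{A,k}(y) ≤ t} equals tk + A. -/
open Set Pointwise

/-!
The admissible levels {s | y - s • k ∈ A} form a closed (A is closed) upper (A - s k ⊆ A) subset
of ℝ, so it contains every real t bounding its infimum φ(y) from above.
-/

theorem IsUpperSet.sInf_coe_le_iff {S : Set ℝ} (hup : IsUpperSet S) (hS : IsClosed S) (t : ℝ) :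
    sInf (((↑) : ℝ → EReal) '' S) ≤ t ↔ t ∈ S := by
  refine ⟨fun h => ?_, fun ht => sInf_le (mem_image_of_mem _ ht)⟩
  have hIoi : Ioi t ⊆ S := fun u hu => by
    obtain ⟨_, ⟨s, hs, rfl⟩, hsu⟩ := sInf_lt_iff.1 (h.trans_lt (EReal.coe_lt_coe_iff.2 hu))
    exact hup (EReal.coe_lt_coe_iff.1 hsu).le hs
  exact hS.closure_subset_iff.2 hIoi (closure_Ioi t ▸ self_mem_Ici)

theorem isUpperSet_setOf_sub_smul_mem {Y : Type*} [AddCommGroup Y] [Module ℝ Y] {A : Set Y}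
    {k : Y} (hrec : ∀ a ∈ A, ∀ t : ℝ, 0 ≤ t → a - t • k ∈ A) (y : Y) :
    IsUpperSet {s : ℝ | y - s • k ∈ A} := by
  intro s s' hss' hs
  have h := hrec _ hs (s' - s) (sub_nonneg.2 hss')
  rwa [sub_smul, sub_sub, ← add_sub_assoc, add_sub_cancel_left] at h

theorem isClosed_setOf_sub_smul_mem {Y : Type*} [AddCommGroup Y] [Module ℝ Y]
    [TopologicalSpace Y] [IsTopologicalAddGroup Y] [ContinuousSMul ℝ Y] {A : Set Y}
    (hAc : IsClosed A) (k y : Y) : IsClosed {s : ℝ | y - s • k ∈ A} :=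
  hAc.preimage (by fun_prop)

theorem stmt_1_general {Y : Type*} [AddCommGroup Y] [Module ℝ Y] [TopologicalSpace Y]
    [IsTopologicalAddGroup Y] [ContinuousSMul ℝ Y]
    (A : Set Y) (hAc : IsClosed A)
    (k : Y) (hrec : ∀ a ∈ A, ∀ t : ℝ, 0 ≤ t → a - t • k ∈ A) :
    ∀ t : ℝ, {y | phiF A k y ≤ (t : EReal)} = {y | y - t • k ∈ A} := fun t => by
  ext y
  exact (isUpperSet_setOf_sub_smul_mem hrec y).sInf_coe_le_iff
    (isClosed_setOf_sub_smul_mem hAc k y) t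

theorem stmt_1 {Y : Type*} [AddCommGroup Y] [Module ℝ Y] [TopologicalSpace Y]
    [IsTopologicalAddGroup Y] [ContinuousSMul ℝ Y]
    (A : Set Y) (hAc : IsClosed A) (hAne : A.Nonempty) (hAp : A ≠ Set.univ)
    (k : Y) (hk : k ≠ 0) (hrec : ∀ a ∈ A, ∀ t : ℝ, 0 ≤ t → a - t • k ∈ A) :
    ∀ t : ℝ, {y | phiF A k y ≤ (t : EReal)} = {y | y - t • k ∈ A} :=
  stmt_1_general A hAc k hrec
end

section
/- Under hypothesis (H1), the following are equivalent: (i) φ_{A,k} is continuous on its domain ℝk + A and this domain is open; (ii) A - (0,∞)·k ⊆ int A; (iii) bd A - (0,∞)·k ⊆ int A; (iv) for every t ∈ ℝ, {y : φ_{A,k}(y) < t} = tk + int A; (v) for every t ∈ ℝ, {y : φ_{A,k}(y) = t} = tk + bd A. -/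
open Set Pointwise

open Topology

/-!
Since `A - ℝ₊k ⊆ A`, the sublevel set `{φ ≤ t}` is exactly `tk + A`, which is closed; so `φ` is
always lower semicontinuous. Condition (ii) says that pushing a point of `A` strictly in the
direction `-k` lands in `int A`; this makes the strict sublevel sets `{φ < t}` equal to
`tk + int A`, hence open, so `φ` is also upper semicontinuous, and the domain `{φ < ⊤}` is open.
Conversely, continuity forces `{φ < 0}`, a subset of `A`, to be a neighbourhood of `a - tk` for
`a ∈ A`, `t > 0`. The level sets are then the differences `{φ ≤ t} \ {φ < t} = tk + bd A`, and
points of `A` have `φ ≤ 0`, which gives (v) ⇒ (ii).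
-/

namespace EReal

variable {X : Type*} [TopologicalSpace X] {f : X → EReal}

theorem lowerSemicontinuous_of_isOpen_coe_lt (h : ∀ r : ℝ, IsOpen {x | (r : EReal) < f x}) :
    LowerSemicontinuous f := by
  intro x b hb
  obtain ⟨r, hbr, hr⟩ := exists_between_coe_real hb
  filter_upwards [(h r).mem_nhds hr] with x' hx' using hbr.trans hx'

theorem upperSemicontinuous_of_isOpen_lt_coe (h : ∀ r : ℝ, IsOpen {x | f x < (r : EReal)}) :
    UpperSemicontinuous f := by
  intro x b hb
  obtain ⟨r, hr, hrb⟩ := exists_between_coe_real hb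
  filter_upwards [(h r).mem_nhds hr] with x' hx' using hx'.trans hrb

end EReal

section Algebraic

variable {Y : Type*} [AddCommGroup Y] [Module ℝ Y] {A : Set Y} {k y : Y}

theorem phiF_lt_iff {c : EReal} : phiF A k y < c ↔ ∃ s : ℝ, (s : EReal) < c ∧ y - s • k ∈ A := by
  simp [phiF, sInf_lt_iff, and_comm]

theorem phiF_le_coe_of_mem {t : ℝ} (h : y - t • k ∈ A) : phiF A k y ≤ t :=
  sInf_le ⟨t, h, rfl⟩

theorem phiF_lt_top_iff : phiF A k y < ⊤ ↔ ∃ t : ℝ, y - t • k ∈ A := by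
  simp [phiF_lt_iff]

theorem sub_smul_sub_smul (y k : Y) (s t : ℝ) : y - s • k - (t - s) • k = y - t • k := by
  module

variable (hrec : ∀ a ∈ A, ∀ t : ℝ, 0 ≤ t → a - t • k ∈ A)
include hrec

theorem sub_smul_mem_of_le {s t : ℝ} (hs : y - s • k ∈ A) (hst : s ≤ t) : y - t • k ∈ A :=
  sub_smul_sub_smul y k s t ▸ hrec _ hs (t - s) (sub_nonneg.2 hst)

theorem sub_smul_mem_of_phiF_lt {t : ℝ} (h : phiF A k y < t) : y - t • k ∈ A := by
  obtain ⟨s, hst, hs⟩ := phiF_lt_iff.1 h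
  exact sub_smul_mem_of_le hrec hs (EReal.coe_lt_coe_iff.1 hst).le

end Algebraic

section Topological

variable {Y : Type*} [AddCommGroup Y] [Module ℝ Y] [TopologicalSpace Y] {A : Set Y} {k y : Y}
  (hAc : IsClosed A) (hrec : ∀ a ∈ A, ∀ t : ℝ, 0 ≤ t → a - t • k ∈ A)

include hrec in
theorem mem_interior_of_continuousAt_phiF {a : Y} (ha : a ∈ A) {t : ℝ} (ht : 0 < t)
    (hc : ContinuousAt (phiF A k) (a - t • k)) : a - t • k ∈ interior A := by
  have hneg : phiF A k (a - t • k) < (0 : ℝ) :=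
    (phiF_le_coe_of_mem (t := -t) (by simpa using ha)).trans_lt
      (by exact_mod_cast neg_neg_of_pos ht)
  refine mem_interior_iff_mem_nhds.2 (Filter.mem_of_superset (hc.eventually_lt_const hneg) ?_)
  intro x hx
  simpa using sub_smul_mem_of_phiF_lt hrec (t := 0) hx

variable [IsTopologicalAddGroup Y]

include hrec in
theorem sub_smul_mem_interior {a : Y} (ha : a ∈ interior A) {t : ℝ} (ht : 0 ≤ t) :
    a - t • k ∈ interior A := by
  have hsub : (· + t • k) ⁻¹' interior A ⊆ A := fun x hx => by
    simpa using hrec _ (interior_subset hx) t ht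
  exact interior_maximal hsub (isOpen_interior.preimage (by fun_prop)) (by simpa using ha)

variable [ContinuousSMul ℝ Y]

theorem phiF_lt_coe_of_mem_interior {t : ℝ} (h : y - t • k ∈ interior A) : phiF A k y < t := by
  have hnhds : ∀ᶠ s in 𝓝[<] t, y - s • k ∈ A :=
    nhdsWithin_le_nhds <| ((by fun_prop : Continuous fun s : ℝ => y - s • k).tendsto t).eventually
      (mem_interior_iff_mem_nhds.1 h)
  obtain ⟨s, hs, hst⟩ := (hnhds.and self_mem_nhdsWithin).exists
  exact (phiF_le_coe_of_mem hs).trans_lt (EReal.coe_lt_coe_iff.2 hst)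

theorem phiF_lt_coe_iff (hint : ∀ a ∈ A, ∀ t : ℝ, 0 < t → a - t • k ∈ interior A) {t : ℝ} :
    phiF A k y < t ↔ y - t • k ∈ interior A := by
  refine ⟨fun h => ?_, phiF_lt_coe_of_mem_interior⟩
  obtain ⟨s, hst, hs⟩ := phiF_lt_iff.1 h
  exact sub_smul_sub_smul y k s t ▸ hint _ hs _ (sub_pos.2 (EReal.coe_lt_coe_iff.1 hst))

include hAc hrec

theorem phiF_le_coe_iff {t : ℝ} : phiF A k y ≤ t ↔ y - t • k ∈ A := by
  refine ⟨fun h => ?_, phiF_le_coe_of_mem⟩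
  refine hAc.mem_of_tendsto (b := 𝓝[>] t)
    (((by fun_prop : Continuous fun s : ℝ => y - s • k).tendsto t).mono_left nhdsWithin_le_nhds)
    (eventually_nhdsWithin_of_forall fun s hs => ?_)
  exact sub_smul_mem_of_phiF_lt hrec (h.trans_lt (EReal.coe_lt_coe_iff.2 hs))

theorem lowerSemicontinuous_phiF : LowerSemicontinuous (phiF A k) := by
  refine EReal.lowerSemicontinuous_of_isOpen_coe_lt fun r => ?_
  simp_rw [← not_le, phiF_le_coe_iff hAc hrec]
  exact (hAc.preimage (by fun_prop)).isOpen_compl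

theorem phiF_eq_coe_iff {t : ℝ} (hlt : phiF A k y < t ↔ y - t • k ∈ interior A) :
    phiF A k y = t ↔ y - t • k ∈ frontier A := by
  rw [le_antisymm_iff, phiF_le_coe_iff hAc hrec, ← not_lt, hlt, hAc.frontier_eq, mem_sdiff]

theorem continuous_phiF (hint : ∀ a ∈ A, ∀ t : ℝ, 0 < t → a - t • k ∈ interior A) :
    Continuous (phiF A k) := by
  refine continuous_iff_lower_upperSemicontinuous.2 ⟨lowerSemicontinuous_phiF hAc hrec, ?_⟩
  refine EReal.upperSemicontinuous_of_isOpen_lt_coe fun r => ?_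
  simp_rw [phiF_lt_coe_iff hint]
  exact isOpen_interior.preimage (by fun_prop)

end Topological

theorem stmt_5_general {Y : Type*} [AddCommGroup Y] [Module ℝ Y] [TopologicalSpace Y]
    [IsTopologicalAddGroup Y] [ContinuousSMul ℝ Y]
    (A : Set Y) (hAc : IsClosed A)
    (k : Y) (hrec : ∀ a ∈ A, ∀ t : ℝ, 0 ≤ t → a - t • k ∈ A) :
    List.TFAE
      [ ContinuousOn (phiF A k) {y | ∃ t : ℝ, y - t • k ∈ A} ∧
          IsOpen {y | ∃ t : ℝ, y - t • k ∈ A},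
        ∀ a ∈ A, ∀ t : ℝ, 0 < t → a - t • k ∈ interior A,
        ∀ b ∈ frontier A, ∀ t : ℝ, 0 < t → b - t • k ∈ interior A,
        ∀ t : ℝ, {y | phiF A k y < (t : EReal)} = {y | y - t • k ∈ interior A},
        ∀ t : ℝ, {y | phiF A k y = (t : EReal)} = {y | y - t • k ∈ frontier A} ] := by
  tfae_have 1 → 2 := fun ⟨hc, hdom⟩ a ha t ht =>
    mem_interior_of_continuousAt_phiF hrec ha ht
      (hc.continuousAt (hdom.mem_nhds ⟨-t, by simpa using ha⟩))
  tfae_have 2 → 4 := fun hint t => ext fun y => phiF_lt_coe_iff hint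
  tfae_have 2 → 1 := by
    intro hint
    have hcont := continuous_phiF hAc hrec hint
    simp_rw [← phiF_lt_top_iff]
    exact ⟨hcont.continuousOn, isOpen_lt hcont continuous_const⟩
  tfae_have 2 → 3 := fun hint b hb => hint b (hAc.frontier_subset hb)
  tfae_have 3 → 2 := by
    intro hfr a ha t ht
    by_cases hai : a ∈ interior A
    · exact sub_smul_mem_interior hrec hai ht.le
    · exact hfr a (hAc.frontier_eq ▸ ⟨ha, hai⟩) t ht
  tfae_have 4 → 5 := fun hlt t => ext fun y =>
    phiF_eq_coe_iff hAc hrec (Set.ext_iff.1 (hlt t) y)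
  tfae_have 5 → 2 := by
    intro heq a ha t ht
    by_contra hni
    have hat : phiF A k a = t :=
      (Set.ext_iff.1 (heq t) a).2 (hAc.frontier_eq ▸ ⟨hrec a ha t ht.le, hni⟩)
    have ha0 : phiF A k a ≤ (0 : ℝ) := phiF_le_coe_of_mem (by simpa using ha)
    exact ht.not_ge (EReal.coe_le_coe_iff.1 (hat ▸ ha0))
  tfae_finish

theorem stmt_5 {Y : Type*} [AddCommGroup Y] [Module ℝ Y] [TopologicalSpace Y]
    [IsTopologicalAddGroup Y] [ContinuousSMul ℝ Y]
    (A : Set Y) (hAc : IsClosed A) (hAne : A.Nonempty) (hAp : A ≠ Set.univ)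
    (k : Y) (hk : k ≠ 0) (hrec : ∀ a ∈ A, ∀ t : ℝ, 0 ≤ t → a - t • k ∈ A) :
    List.TFAE
      [ ContinuousOn (phiF A k) {y | ∃ t : ℝ, y - t • k ∈ A} ∧
          IsOpen {y | ∃ t : ℝ, y - t • k ∈ A},
        ∀ a ∈ A, ∀ t : ℝ, 0 < t → a - t • k ∈ interior A,
        ∀ b ∈ frontier A, ∀ t : ℝ, 0 < t → b - t • k ∈ interior A,
        ∀ t : ℝ, {y | phiF A k y < (t : EReal)} = {y | y - t • k ∈ interior A},
        ∀ t : ℝ, {y | phiF A k y = (t : EReal)} = {y | y - t • k ∈ frontier A} ] :=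
  stmt_5_general A hAc k hrec
end

section
/- Under hypothesis (H1), φ_{A,k} is proper (attains no value -∞ and its domain is nonempty) if and only if A contains no line parallel to k, i.e., for every a ∈ A, a + ℝk ⊄ A. -/
open Set Pointwise

theorem stmt_6 {Y : Type*} [AddCommGroup Y] [Module ℝ Y] [TopologicalSpace Y]
    [IsTopologicalAddGroup Y] [ContinuousSMul ℝ Y]
    (A : Set Y) (hAc : IsClosed A) (hAne : A.Nonempty) (hAp : A ≠ Set.univ)
    (k : Y) (hk : k ≠ 0) (hrec : ∀ a ∈ A, ∀ t : ℝ, 0 ≤ t → a - t • k ∈ A) :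
    ((∃ y : Y, phiF A k y ≠ ⊤) ∧ ∀ y : Y, phiF A k y ≠ ⊥) ↔
      ∀ a ∈ A, ¬ (∀ t : ℝ, a + t • k ∈ A) := by
  constructor
  · rintro ⟨-, hbot⟩ a ha hline
    apply hbot a
    unfold phiF
    apply sInf_eq_bot.mpr
    intro b hb
    induction b with
    | bot => exact absurd hb (lt_irrefl _)
    | coe x =>
      refine ⟨((x - 1 : ℝ) : EReal), ⟨x - 1, ?_, rfl⟩, by exact_mod_cast sub_one_lt x⟩
      have h1 := hline (-(x - 1))
      have he : a - (x - 1) • k = a + (-(x - 1)) • k := by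
        rw [neg_smul, sub_eq_add_neg]
      exact Set.mem_setOf_eq ▸ he ▸ h1
    | top =>
      refine ⟨((0 : ℝ) : EReal), ⟨0, by simpa using ha, rfl⟩, ?_⟩
      exact lt_top_iff_ne_top.mpr (by simp)
  · intro hnoline
    constructor
    · obtain ⟨a, ha⟩ := hAne
      refine ⟨a, ?_⟩
      have h0 : phiF A k a ≤ ((0 : ℝ) : EReal) :=
        sInf_le ⟨0, by simpa using ha, rfl⟩
      exact fun h => absurd (h ▸ h0) (by simp)
    · intro y hbot
      have hS : ∀ t : ℝ, y - t • k ∈ A := by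
        intro t
        obtain ⟨x, ⟨s, hs, rfl⟩, hx⟩ :=
          sInf_eq_bot.mp hbot ((t : EReal)) (by exact_mod_cast bot_lt_iff_ne_bot.mpr (by simp))
        have hst : s < t := by exact_mod_cast show ((s:EReal)) < (t:EReal) from hx
        have h2 := hrec _ hs (t - s) (by linarith)
        have : y - s • k - (t - s) • k = y - t • k := by
          rw [sub_smul]; abel
        rwa [this] at h2
      refine hnoline y (by simpa using hS 0) fun t => ?_
      have h3 := hS (-t)
      have he : y - (-t) • k = y + t • k := by rw [neg_smul, sub_neg_eq_add]
      rwa [he] at h3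
end

section
/- Under hypothesis (H1), if φ_{A,k} is proper then A = bd A - [0,∞)·k and dom φ_{A,k} = ℝk + bd A. -/
open Set Pointwise

/-! Properness makes every nonempty slice `{t | y - t • k ∈ A}` closed and bounded below, so it
has a least element `s`. The point `y - s • k` lies in `A`, and the points `y - t • k` with `t < s`
lie outside `A` and converge to it, so it is a boundary point. -/

open Filter Topology

lemma mem_frontier_of_isLeast_preimage {X : Type*} [TopologicalSpace X] {A : Set X} {f : ℝ → X}
    (hf : Continuous f) {s : ℝ} (hs : IsLeast (f ⁻¹' A) s) : f s ∈ frontier A := by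
  rw [frontier_eq_closure_inter_closure]
  refine ⟨subset_closure hs.1,
    mem_closure_of_tendsto ((hf.tendsto s).mono_left (nhdsWithin_le_nhds (s := Iio s))) ?_⟩
  filter_upwards [self_mem_nhdsWithin] with t (ht : t < s)
  exact fun htA => ht.not_ge (hs.2 htA)

section ScalarizingFunction

variable {Y : Type*} [AddCommGroup Y] [Module ℝ Y] {A : Set Y} {k y : Y}

lemma bddBelow_of_phiF_ne_bot (hy : phiF A k y ≠ ⊥) : BddBelow {t : ℝ | y - t • k ∈ A} := by
  obtain ⟨r, -, hr⟩ := EReal.lt_iff_exists_real_btwn.mp (bot_lt_iff_ne_bot.mpr hy)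
  exact ⟨r, fun t ht => by exact_mod_cast hr.le.trans (sInf_le (mem_image_of_mem _ ht))⟩

lemma exists_le_sub_smul_mem_frontier [TopologicalSpace Y] [IsTopologicalAddGroup Y]
    [ContinuousSMul ℝ Y] (hA : IsClosed A) (hy : phiF A k y ≠ ⊥) {t : ℝ}
    (ht : y - t • k ∈ A) : ∃ s ≤ t, y - s • k ∈ frontier A := by
  have hcont : Continuous fun s : ℝ => y - s • k := by fun_prop
  have hleast := (hA.preimage hcont).isLeast_csInf ⟨t, ht⟩ (bddBelow_of_phiF_ne_bot hy)
  exact ⟨_, hleast.2 ht, mem_frontier_of_isLeast_preimage hcont hleast⟩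

end ScalarizingFunction

theorem stmt_7_general {Y : Type*} [AddCommGroup Y] [Module ℝ Y] [TopologicalSpace Y]
    [IsTopologicalAddGroup Y] [ContinuousSMul ℝ Y]
    (A : Set Y) (hAc : IsClosed A)
    (k : Y) (hrec : ∀ a ∈ A, ∀ t : ℝ, 0 ≤ t → a - t • k ∈ A)
    (hproper : (∃ y : Y, phiF A k y ≠ ⊤) ∧ ∀ y : Y, phiF A k y ≠ ⊥) :
    A = {y | ∃ b ∈ frontier A, ∃ t : ℝ, 0 ≤ t ∧ y = b - t • k} ∧
      {y | ∃ t : ℝ, y - t • k ∈ A} = {y | ∃ b ∈ frontier A, ∃ t : ℝ, y = b + t • k} := by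
  obtain ⟨-, hbot⟩ := hproper
  refine ⟨Subset.antisymm (fun a ha => ?_) ?_, Subset.antisymm ?_ ?_⟩
  · obtain ⟨s, hs, hb⟩ := exists_le_sub_smul_mem_frontier hAc (hbot a) (t := 0) (by simpa)
    exact ⟨_, hb, -s, by linarith, by simp⟩
  · rintro _ ⟨b, hb, t, ht, rfl⟩
    exact hrec b (hAc.frontier_subset hb) t ht
  · rintro y ⟨t, ht⟩
    obtain ⟨s, -, hb⟩ := exists_le_sub_smul_mem_frontier hAc (hbot y) ht
    exact ⟨_, hb, s, by abel⟩
  · rintro _ ⟨b, hb, t, rfl⟩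
    exact ⟨t, by simpa using hAc.frontier_subset hb⟩

theorem stmt_7 {Y : Type*} [AddCommGroup Y] [Module ℝ Y] [TopologicalSpace Y]
    [IsTopologicalAddGroup Y] [ContinuousSMul ℝ Y]
    (A : Set Y) (hAc : IsClosed A) (hAne : A.Nonempty) (hAp : A ≠ Set.univ)
    (k : Y) (hk : k ≠ 0) (hrec : ∀ a ∈ A, ∀ t : ℝ, 0 ≤ t → a - t • k ∈ A)
    (hproper : (∃ y : Y, phiF A k y ≠ ⊤) ∧ ∀ y : Y, phiF A k y ≠ ⊥) :
    A = {y | ∃ b ∈ frontier A, ∃ t : ℝ, 0 ≤ t ∧ y = b - t • k} ∧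
      {y | ∃ t : ℝ, y - t • k ∈ A} = {y | ∃ b ∈ frontier A, ∃ t : ℝ, y = b + t • k} :=
  stmt_7_general A hAc k hrec hproper
end

section
/- Under hypothesis (H1), for y⁰ ∈ A + ℝk and y¹ ∈ 0⁺A + ℝk, one has y⁰ + y¹ ∈ A + ℝk and φ_{A,k}(y⁰ + y¹) ≤ φ_{A,k}(y⁰) + φ_{0⁺A,k}(y¹). -/
open Set Pointwise

theorem EReal.sInf_le_sInf_add_sInf {s t u : Set EReal} (hstu : s + t ⊆ u)
    (h₁ : sInf s ≠ ⊥ ∨ sInf t ≠ ⊤) (h₂ : sInf s ≠ ⊤ ∨ sInf t ≠ ⊥) :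
    sInf u ≤ sInf s + sInf t := by
  refine EReal.le_add_of_forall_gt h₁ h₂ fun a ha b hb ↦ ?_
  obtain ⟨x, hx, hxa⟩ := sInf_lt_iff.1 ha
  obtain ⟨y, hy, hyb⟩ := sInf_lt_iff.1 hb
  exact (sInf_le (hstu (add_mem_add hx hy))).trans (add_le_add hxa.le hyb.le)

section phiF

variable {Y : Type*} [AddCommGroup Y] [Module ℝ Y]

theorem add_recCone_subset (A : Set Y) : A + recCone A ⊆ A := by
  rintro _ ⟨a, ha, u, hu, rfl⟩
  simpa using hu a ha 1 zero_le_one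

theorem sub_smul_mem_of_add_subset {A B C : Set Y} (hABC : A + B ⊆ C) {k y₀ y₁ : Y} {t₀ t₁ : ℝ}
    (ht₀ : y₀ - t₀ • k ∈ A) (ht₁ : y₁ - t₁ • k ∈ B) : (y₀ + y₁) - (t₀ + t₁) • k ∈ C := by
  convert hABC (add_mem_add ht₀ ht₁) using 1
  rw [add_smul]
  abel

theorem phiF_ne_top {A : Set Y} {k y : Y} (hy : ∃ t : ℝ, y - t • k ∈ A) : phiF A k y ≠ ⊤ := by
  obtain ⟨t, ht⟩ := hy
  exact ne_top_of_le_ne_top (EReal.coe_ne_top t) (sInf_le (mem_image_of_mem _ ht))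

theorem phiF_add_le {A B C : Set Y} (hABC : A + B ⊆ C) {k y₀ y₁ : Y}
    (hy₀ : ∃ t : ℝ, y₀ - t • k ∈ A) (hy₁ : ∃ t : ℝ, y₁ - t • k ∈ B) :
    phiF C k (y₀ + y₁) ≤ phiF A k y₀ + phiF B k y₁ := by
  refine EReal.sInf_le_sInf_add_sInf ?_ (.inr (phiF_ne_top hy₁)) (.inl (phiF_ne_top hy₀))
  rintro _ ⟨_, ⟨t₀, ht₀, rfl⟩, _, ⟨t₁, ht₁, rfl⟩, rfl⟩
  exact ⟨t₀ + t₁, sub_smul_mem_of_add_subset hABC ht₀ ht₁, EReal.coe_add t₀ t₁⟩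

end phiF

theorem stmt_12_general {Y : Type*} [AddCommGroup Y] [Module ℝ Y]
    (A : Set Y)
    (k : Y)
    (y₀ y₁ : Y) (hy₀ : ∃ t : ℝ, y₀ - t • k ∈ A) (hy₁ : ∃ t : ℝ, y₁ - t • k ∈ recCone A) :
    (∃ t : ℝ, (y₀ + y₁) - t • k ∈ A) ∧
      phiF A k (y₀ + y₁) ≤ phiF A k y₀ + phiF (recCone A) k y₁ := by
  obtain ⟨t₀, ht₀⟩ := hy₀
  obtain ⟨t₁, ht₁⟩ := hy₁
  exact ⟨⟨t₀ + t₁, sub_smul_mem_of_add_subset (add_recCone_subset A) ht₀ ht₁⟩,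
    phiF_add_le (add_recCone_subset A) ⟨t₀, ht₀⟩ ⟨t₁, ht₁⟩⟩

theorem stmt_12 {Y : Type*} [AddCommGroup Y] [Module ℝ Y] [TopologicalSpace Y]
    [IsTopologicalAddGroup Y] [ContinuousSMul ℝ Y]
    (A : Set Y) (hAc : IsClosed A) (hAne : A.Nonempty) (hAp : A ≠ Set.univ)
    (k : Y) (hk : k ≠ 0) (hrec : ∀ a ∈ A, ∀ t : ℝ, 0 ≤ t → a - t • k ∈ A)
    (y₀ y₁ : Y) (hy₀ : ∃ t : ℝ, y₀ - t • k ∈ A) (hy₁ : ∃ t : ℝ, y₁ - t • k ∈ recCone A) :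
    (∃ t : ℝ, (y₀ + y₁) - t • k ∈ A) ∧
      phiF A k (y₀ + y₁) ≤ phiF A k y₀ + phiF (recCone A) k y₁ :=
  stmt_12_general A k y₀ y₁ hy₀ hy₁
end

section
/- Let C be a convex cone in a linear space Y and k ∈ C \ {0}. Then Y = C + ℝk if and only if k ∈ core C (the algebraic interior of C). -/
open Set Pointwise

/-!
If `y = c + t • k` with `c ∈ C`, then `k + s • y = (1 + s t) • k + s • c` lies in `C` as long as
`1 + s t ≥ 0`, which holds for all small `s ≥ 0`. Conversely, if `k + ε • y ∈ C`, then
`y = ε⁻¹ • (k + ε • y) - ε⁻¹ • k` is in `C + ℝ k`.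
-/

section

variable {Y : Type*} [AddCommGroup Y] [Module ℝ Y] {C : Set Y}

theorem add_mem_of_convex_of_smul_mem (hC : Convex ℝ C)
    (hcone : ∀ c : ℝ, 0 ≤ c → ∀ x ∈ C, c • x ∈ C) {a b : Y} (ha : a ∈ C) (hb : b ∈ C) :
    a + b ∈ C := by
  have hmid := hC ha hb (by norm_num : (0 : ℝ) ≤ 1 / 2) (by norm_num : (0 : ℝ) ≤ 1 / 2)
    (by norm_num)
  convert hcone 2 zero_le_two _ hmid using 1
  module

theorem one_add_mul_nonneg_of_le_inv {s t : ℝ} (hs : 0 ≤ s) (hst : s ≤ (1 + |t|)⁻¹) :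
    0 ≤ 1 + s * t := by
  have h1 : s * (1 + |t|) ≤ 1 :=
    calc s * (1 + |t|) ≤ (1 + |t|)⁻¹ * (1 + |t|) := by gcongr
      _ = 1 := inv_mul_cancel₀ (by positivity)
  nlinarith [neg_abs_le t, mul_le_mul_of_nonneg_left (neg_abs_le t) hs]

theorem mem_algInterior_of_forall_eq_add_smul (hadd : ∀ a ∈ C, ∀ b ∈ C, a + b ∈ C)
    (hcone : ∀ c : ℝ, 0 ≤ c → ∀ x ∈ C, c • x ∈ C) {k : Y} (hkC : k ∈ C)
    (h : ∀ y : Y, ∃ c ∈ C, ∃ t : ℝ, y = c + t • k) : k ∈ algInterior C := by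
  refine ⟨hkC, fun y => ?_⟩
  obtain ⟨c, hc, t, rfl⟩ := h y
  refine ⟨(1 + |t|)⁻¹, by positivity, fun s hs hsε => ?_⟩
  have hmem := hadd _ (hcone _ (one_add_mul_nonneg_of_le_inv hs hsε) k hkC) _ (hcone s hs c hc)
  convert hmem using 1
  module

theorem exists_eq_add_smul_of_mem_algInterior (hcone : ∀ c : ℝ, 0 ≤ c → ∀ x ∈ C, c • x ∈ C)
    {k : Y} (hk : k ∈ algInterior C) (y : Y) : ∃ c ∈ C, ∃ t : ℝ, y = c + t • k := by
  obtain ⟨ε, hε, hεC⟩ := hk.2 y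
  refine ⟨ε⁻¹ • (k + ε • y), hcone _ (inv_nonneg.mpr hε.le) _ (hεC ε hε.le le_rfl), -ε⁻¹, ?_⟩
  rw [smul_add, smul_smul, inv_mul_cancel₀ hε.ne', one_smul, neg_smul]
  abel

end

theorem stmt_14_general {Y : Type*} [AddCommGroup Y] [Module ℝ Y]
    (C : Set Y) (hC : Convex ℝ C) (hcone : ∀ c : ℝ, 0 ≤ c → ∀ x ∈ C, c • x ∈ C)
    (k : Y) (hkC : k ∈ C) :
    (∀ y : Y, ∃ c ∈ C, ∃ t : ℝ, y = c + t • k) ↔ k ∈ algInterior C :=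
  ⟨mem_algInterior_of_forall_eq_add_smul
      (fun _ ha _ hb => add_mem_of_convex_of_smul_mem hC hcone ha hb) hcone hkC,
    fun hk => exists_eq_add_smul_of_mem_algInterior hcone hk⟩

theorem stmt_14 {Y : Type*} [AddCommGroup Y] [Module ℝ Y]
    (C : Set Y) (hC : Convex ℝ C) (hcone : ∀ c : ℝ, 0 ≤ c → ∀ x ∈ C, c • x ∈ C)
    (k : Y) (hkC : k ∈ C) (hk : k ≠ 0) :
    (∀ y : Y, ∃ c ∈ C, ∃ t : ℝ, y = c + t • k) ↔ k ∈ algInterior C :=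
  stmt_14_general C hC hcone k hkC
end

section
/- Under hypothesis (H2) (A - (0,∞)·k ⊆ int A), the set Y \ int A with direction -k also satisfies (H2), and φ_{A,k}(y) = -φ_{Y\int A, -k}(y) for all y ∈ bd A + ℝk; moreover bd A + ℝk is exactly the set of points where each of the two functions is finite. -/
open Set Pointwise

open Filter Topology

/-!
Along every line `y + ℝk`, hypothesis (H2) makes `{t | y - t • k ∈ A}` an up-closed set whose
members other than its least element correspond to points of `int A`. Hence `φ_{A,k}` is finite
at `y` exactly when the line meets `bd A`, at the unique point `b = y - φ_{A,k}(y) k`, and then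
`φ_{A,k}(b + t k) = t`. Since `A` is closed, (H2) also gives `A = cl (int A)`, so `Y \ int A`
has the same boundary as `A`; it satisfies (H2) for `-k`, and on `b + t k = b + (-t)(-k)` the
two functionals take the values `t` and `-t`.
-/

lemma sInf_coe_image_Ici (t : ℝ) : sInf ((fun s : ℝ => (s : EReal)) '' Ici t) = t :=
  le_antisymm (sInf_le ⟨t, self_mem_Ici, rfl⟩) <|
    le_sInf <| by rintro _ ⟨s, hs, rfl⟩; exact EReal.coe_le_coe_iff.2 hs

lemma Ioi_subset_of_sInf_coe_image_eq {S : Set ℝ} (hS : ∀ s ∈ S, ∀ t, s < t → t ∈ S) {m : ℝ}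
    (hm : sInf ((fun s : ℝ => (s : EReal)) '' S) = m) : Ioi m ⊆ S := by
  intro t ht
  obtain ⟨_, ⟨s, hsS, rfl⟩, hst⟩ := sInf_lt_iff.1 (hm ▸ EReal.coe_lt_coe_iff.2 ht)
  exact hS s hsS t (EReal.coe_lt_coe_iff.1 hst)

section Shift

variable {Y : Type*} [AddCommGroup Y] [Module ℝ Y] [TopologicalSpace Y]

/-- Hypothesis (H2): `A - (0, ∞) • k ⊆ int A`. -/
def ShiftsIntoInterior (A : Set Y) (k : Y) : Prop :=
  ∀ a ∈ A, ∀ t : ℝ, 0 < t → a - t • k ∈ interior A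

variable {A : Set Y} {k : Y}

lemma ShiftsIntoInterior.sub_smul_mem (h : ShiftsIntoInterior A k) {a : Y} (ha : a ∈ A) {t : ℝ}
    (ht : 0 < t) : a - t • k ∈ A :=
  interior_subset (h a ha t ht)

lemma ShiftsIntoInterior.add_smul_mem_frontier_iff (hAc : IsClosed A)
    (h : ShiftsIntoInterior A k) {b : Y} (hb : b ∈ frontier A) (r : ℝ) :
    b + r • k ∈ A ↔ r ≤ 0 := by
  rw [hAc.frontier_eq] at hb
  have hsub : b + r • k = b - (-r) • k := by rw [neg_smul, sub_neg_eq_add]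
  refine ⟨fun hr => ?_, fun hr => ?_⟩
  · by_contra! hpos
    exact hb.2 (by simpa using h _ hr r hpos)
  · rcases hr.eq_or_lt with rfl | hneg
    · simpa using hb.1
    · exact hsub ▸ h.sub_smul_mem hb.1 (neg_pos.2 hneg)

lemma ShiftsIntoInterior.phiF_add_smul (hAc : IsClosed A) (h : ShiftsIntoInterior A k)
    {b : Y} (hb : b ∈ frontier A) (t : ℝ) : phiF A k (b + t • k) = t := by
  have hS : {s : ℝ | b + t • k - s • k ∈ A} = Ici t := by
    ext s
    rw [mem_ofPred_eq, add_sub_assoc, ← sub_smul, h.add_smul_mem_frontier_iff hAc hb, mem_Ici,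
      sub_nonpos]
  rw [phiF, hS, sInf_coe_image_Ici]

lemma ShiftsIntoInterior.sub_smul_mem_frontier_of_phiF_eq [IsTopologicalAddGroup Y]
    [ContinuousSMul ℝ Y] (hAc : IsClosed A) (h : ShiftsIntoInterior A k) {y : Y} {m : ℝ}
    (hm : phiF A k y = m) : y - m • k ∈ frontier A := by
  have hline : Continuous fun t : ℝ => y - t • k := by fun_prop
  set S := {t : ℝ | y - t • k ∈ A}
  have hlb : ∀ t ∈ S, m ≤ t := fun t ht =>
    EReal.coe_le_coe_iff.1 (hm ▸ sInf_le ⟨t, ht, rfl⟩)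
  have hup : ∀ s ∈ S, ∀ t, s < t → t ∈ S := fun s hs t hst => by
    simpa [S, sub_sub, ← add_smul] using h.sub_smul_mem hs (sub_pos.2 hst)
  have hmS : m ∈ S := by
    have hIoi := closure_mono (Ioi_subset_of_sInf_coe_image_eq hup hm)
    rw [closure_Ioi] at hIoi
    exact (hAc.preimage hline).closure_subset (hIoi self_mem_Ici)
  refine hAc.frontier_eq ▸ ⟨hmS, fun hmint => ?_⟩
  have hnear : ∀ᶠ t in 𝓝[<] m, y - t • k ∈ interior A :=
    nhdsWithin_le_nhds ((isOpen_interior.preimage hline).mem_nhds hmint)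
  obtain ⟨t, htA, htm⟩ := (hnear.and self_mem_nhdsWithin).exists
  exact (hlb t (interior_subset (s := A) htA)).not_gt htm

lemma ShiftsIntoInterior.setOf_phiF_finite [IsTopologicalAddGroup Y] [ContinuousSMul ℝ Y]
    (hAc : IsClosed A) (h : ShiftsIntoInterior A k) :
    {y | phiF A k y ≠ ⊤ ∧ phiF A k y ≠ ⊥} =
      {y | ∃ b ∈ frontier A, ∃ t : ℝ, y = b + t • k} := by
  ext y
  refine ⟨fun ⟨htop, hbot⟩ => ?_, ?_⟩
  · lift phiF A k y to ℝ using ⟨htop, hbot⟩ with m hm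
    exact ⟨y - m • k, h.sub_smul_mem_frontier_of_phiF_eq hAc hm.symm, m, by abel⟩
  · rintro ⟨b, hb, t, rfl⟩
    rw [mem_ofPred_eq, h.phiF_add_smul hAc hb]
    exact ⟨EReal.coe_ne_top t, EReal.coe_ne_bot t⟩

lemma ShiftsIntoInterior.compl_interior (hAc : IsClosed A) (h : ShiftsIntoInterior A k) :
    ShiftsIntoInterior (interior A)ᶜ (-k) := by
  intro b hb t ht
  rw [smul_neg, sub_neg_eq_add, interior_compl]
  intro hbt
  have hA : b + t • k ∈ A := closure_minimal interior_subset hAc hbt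
  exact hb (by simpa using h _ hA t ht)

lemma ShiftsIntoInterior.closure_interior [IsTopologicalAddGroup Y] [ContinuousSMul ℝ Y]
    (hAc : IsClosed A) (h : ShiftsIntoInterior A k) : closure (interior A) = A := by
  refine (closure_minimal interior_subset hAc).antisymm fun b hb => ?_
  have hlim : Tendsto (fun t : ℝ => b - t • k) (𝓝[>] 0) (𝓝 b) := by
    have hcont : Continuous fun t : ℝ => b - t • k := by fun_prop
    simpa using (hcont.tendsto 0).mono_left nhdsWithin_le_nhds
  exact mem_closure_of_tendsto hlim (eventually_nhdsWithin_of_forall fun t ht => h b hb t ht)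

lemma ShiftsIntoInterior.frontier_compl_interior [IsTopologicalAddGroup Y] [ContinuousSMul ℝ Y]
    (hAc : IsClosed A) (h : ShiftsIntoInterior A k) : frontier (interior A)ᶜ = frontier A := by
  rw [frontier_compl, frontier, interior_interior, h.closure_interior hAc, hAc.frontier_eq]

end Shift

lemma setOf_add_smul_neg {Y : Type*} [AddCommGroup Y] [Module ℝ Y] (s : Set Y) (k : Y) :
    {y | ∃ b ∈ s, ∃ t : ℝ, y = b + t • -k} = {y | ∃ b ∈ s, ∃ t : ℝ, y = b + t • k} := by
  ext y
  refine ⟨fun ⟨b, hb, t, hy⟩ => ⟨b, hb, -t, ?_⟩, fun ⟨b, hb, t, hy⟩ => ⟨b, hb, -t, ?_⟩⟩ <;>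
    simp [hy]

theorem stmt_17_general {Y : Type*} [AddCommGroup Y] [Module ℝ Y] [TopologicalSpace Y]
    [IsTopologicalAddGroup Y] [ContinuousSMul ℝ Y]
    (A : Set Y) (hAc : IsClosed A) (hAne : A.Nonempty) (hAp : A ≠ Set.univ)
    (k : Y) (hint : ∀ a ∈ A, ∀ t : ℝ, 0 < t → a - t • k ∈ interior A) :
    (IsClosed (interior A)ᶜ ∧ ((interior A)ᶜ : Set Y).Nonempty ∧ (interior A)ᶜ ≠ Set.univ ∧
      ∀ b ∈ (interior A)ᶜ, ∀ t : ℝ, 0 < t → b - t • (-k) ∈ interior (interior A)ᶜ) ∧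
    ({y | phiF A k y ≠ ⊤ ∧ phiF A k y ≠ ⊥} =
      {y | ∃ b ∈ frontier A, ∃ t : ℝ, y = b + t • k}) ∧
    ({y | phiF (interior A)ᶜ (-k) y ≠ ⊤ ∧ phiF (interior A)ᶜ (-k) y ≠ ⊥} =
      {y | ∃ b ∈ frontier A, ∃ t : ℝ, y = b + t • k}) ∧
    (∀ y : Y, (∃ b ∈ frontier A, ∃ t : ℝ, y = b + t • k) →
      phiF A k y = - phiF (interior A)ᶜ (-k) y) := by
  have h : ShiftsIntoInterior A k := hint
  have hBc : IsClosed (interior A)ᶜ := isOpen_interior.isClosed_compl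
  have hB := h.compl_interior hAc
  have hfr := h.frontier_compl_interior hAc
  obtain ⟨a, ha⟩ := hAne
  refine ⟨⟨hBc, (nonempty_compl.2 hAp).mono (compl_subset_compl.2 interior_subset),
    compl_ne_univ.2 ⟨_, h a ha 1 one_pos⟩, hB⟩, h.setOf_phiF_finite hAc, ?_, ?_⟩
  · rw [hB.setOf_phiF_finite hBc, hfr, setOf_add_smul_neg]
  · rintro y ⟨b, hb, t, rfl⟩
    rw [h.phiF_add_smul hAc hb, ← neg_smul_neg, hB.phiF_add_smul hBc (hfr ▸ hb), EReal.coe_neg,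
      neg_neg]

theorem stmt_17 {Y : Type*} [AddCommGroup Y] [Module ℝ Y] [TopologicalSpace Y]
    [IsTopologicalAddGroup Y] [ContinuousSMul ℝ Y]
    (A : Set Y) (hAc : IsClosed A) (hAne : A.Nonempty) (hAp : A ≠ Set.univ)
    (k : Y) (hk : k ≠ 0) (hint : ∀ a ∈ A, ∀ t : ℝ, 0 < t → a - t • k ∈ interior A) :
    (IsClosed (interior A)ᶜ ∧ ((interior A)ᶜ : Set Y).Nonempty ∧ (interior A)ᶜ ≠ Set.univ ∧
      ∀ b ∈ (interior A)ᶜ, ∀ t : ℝ, 0 < t → b - t • (-k) ∈ interior (interior A)ᶜ) ∧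
    ({y | phiF A k y ≠ ⊤ ∧ phiF A k y ≠ ⊥} =
      {y | ∃ b ∈ frontier A, ∃ t : ℝ, y = b + t • k}) ∧
    ({y | phiF (interior A)ᶜ (-k) y ≠ ⊤ ∧ phiF (interior A)ᶜ (-k) y ≠ ⊥} =
      {y | ∃ b ∈ frontier A, ∃ t : ℝ, y = b + t • k}) ∧
    (∀ y : Y, (∃ b ∈ frontier A, ∃ t : ℝ, y = b + t • k) →
      phiF A k y = - phiF (interior A)ᶜ (-k) y) :=
  stmt_17_general A hAc hAne hAp k hint
end

section
/- Let Y be a topological vector space, C ⊂ Y a non-trivial closed convex pointed cone, k ∈ core C, and a ∈ Y. Let ‖·‖_{C,k} be the Minkowski functional of the order interval [-k,k]_C = (C - k) ∩ (k - C), which is a norm. Then ‖y - a‖_{C,k} = φ_{a-C,k}(y) for all y ∈ a + C. -/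
open Set Pointwise

/-!
Put `x = y - a ∈ C` and `S = {t | t • k - x ∈ C}`. Both sides are the infimum of `S`: the
right-hand side by a change of variables, the gauge because for `r > 0` and `x ∈ C` the condition
`r⁻¹ • x ∈ [-k, k]_C` reduces to `r • k - x ∈ C`, so the gauge is `inf (S ∩ (0, ∞))`. Since `k` is
an order unit, `S` is a nonempty up-set, and it lies in `[0, ∞)` because `C` is pointed and
`k ≠ 0`; hence intersecting with `(0, ∞)` does not change the infimum.
-/

theorem IsUpperSet.csInf_Ioi_inter {S : Set ℝ} (hS : IsUpperSet S) (hne : S.Nonempty)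
    (h0 : ∀ t ∈ S, 0 ≤ t) : sInf (Ioi 0 ∩ S) = sInf S := by
  obtain ⟨s, hs⟩ := hne
  refine le_antisymm (le_csInf ⟨s, hs⟩ fun t ht => le_of_forall_pos_le_add fun ε hε => ?_)
    (csInf_le_csInf ⟨0, h0⟩ ⟨s + 1, mem_Ioi.2 (by linarith [h0 s hs]), hS (by linarith) hs⟩
      inter_subset_right)
  exact csInf_le ⟨0, fun r hr => hr.1.le⟩
    ⟨mem_Ioi.2 (by linarith [h0 t ht]), hS (by linarith) ht⟩

theorem EReal.coe_csInf {S : Set ℝ} (hne : S.Nonempty) (hbdd : BddBelow S) :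
    ((sInf S : ℝ) : EReal) = sInf ((↑) '' S) :=
  EReal.coe_strictMono.monotone.map_csInf_of_continuousAt
    continuous_coe_real_ereal.continuousAt hne hbdd

section Cone

variable {Y : Type*} [AddCommGroup Y] [Module ℝ Y] {C : Set Y}

theorem Convex.add_mem_of_smul_mem (hconv : Convex ℝ C)
    (hcone : ∀ c : ℝ, 0 ≤ c → ∀ x ∈ C, c • x ∈ C) {u v : Y} (hu : u ∈ C) (hv : v ∈ C) :
    u + v ∈ C := by
  have := hcone 2 zero_le_two _
    (hconv hu hv (by norm_num : (0 : ℝ) ≤ 1 / 2) (by norm_num : (0 : ℝ) ≤ 1 / 2) (by norm_num))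
  rwa [smul_add, smul_smul, smul_smul, show (2 : ℝ) * (1 / 2) = 1 by norm_num, one_smul,
    one_smul] at this

theorem smul_mem_iff_of_pos (hcone : ∀ c : ℝ, 0 ≤ c → ∀ x ∈ C, c • x ∈ C) {c : ℝ} (hc : 0 < c)
    {x : Y} : c • x ∈ C ↔ x ∈ C := by
  refine ⟨fun h => ?_, hcone c hc.le x⟩
  simpa [smul_smul, hc.ne'] using hcone c⁻¹ (inv_nonneg.2 hc.le) _ h

theorem exists_smul_sub_mem_of_mem_algInterior (hcone : ∀ c : ℝ, 0 ≤ c → ∀ x ∈ C, c • x ∈ C)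
    {k : Y} (hk : k ∈ algInterior C) (z : Y) : ∃ t : ℝ, t • k - z ∈ C := by
  obtain ⟨ε, hε, hεk⟩ := hk.2 (-z)
  refine ⟨ε⁻¹, (smul_mem_iff_of_pos hcone hε).1 ?_⟩
  simpa [smul_sub, smul_smul, hε.ne', sub_eq_add_neg] using hεk ε hε.le le_rfl

theorem ne_zero_of_mem_algInterior (hcone : ∀ c : ℝ, 0 ≤ c → ∀ x ∈ C, c • x ∈ C)
    (hC : C ≠ univ) {k : Y} (hk : k ∈ algInterior C) : k ≠ 0 := by
  rintro rfl
  refine hC (eq_univ_of_forall fun z => ?_)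
  simpa using (exists_smul_sub_mem_of_mem_algInterior hcone hk (-z)).choose_spec

theorem isUpperSet_setOf_smul_sub_mem (hadd : ∀ u ∈ C, ∀ v ∈ C, u + v ∈ C)
    (hcone : ∀ c : ℝ, 0 ≤ c → ∀ x ∈ C, c • x ∈ C) {k : Y} (hk : k ∈ C) (x : Y) :
    IsUpperSet {t : ℝ | t • k - x ∈ C} := by
  intro s t hst hs
  have hsum : s • k - x + (t - s) • k = t • k - x := by
    rw [sub_smul]
    abel
  rw [mem_ofPred_eq, ← hsum]
  exact hadd _ hs _ (hcone (t - s) (sub_nonneg.2 hst) k hk)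

theorem nonneg_of_smul_sub_mem (hadd : ∀ u ∈ C, ∀ v ∈ C, u + v ∈ C)
    (hcone : ∀ c : ℝ, 0 ≤ c → ∀ x ∈ C, c • x ∈ C) (hpointed : ∀ x ∈ C, -x ∈ C → x = 0)
    {k : Y} (hk : k ∈ C) (hk0 : k ≠ 0) {x : Y} (hx : x ∈ C) {t : ℝ} (ht : t • k - x ∈ C) :
    0 ≤ t := by
  by_contra! htneg
  have htk : t • k ∈ C := by simpa using hadd _ ht _ hx
  have hnegk : -k ∈ C := by
    simpa [smul_smul, htneg.ne] using hcone (-t⁻¹) (by simp [htneg.le]) _ htk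
  exact hk0 (hpointed k hk hnegk)

theorem gauge_orderInterval_eq (hadd : ∀ u ∈ C, ∀ v ∈ C, u + v ∈ C)
    (hcone : ∀ c : ℝ, 0 ≤ c → ∀ x ∈ C, c • x ∈ C) {k : Y} (hk : k ∈ C) {x : Y} (hx : x ∈ C) :
    gauge {z : Y | z + k ∈ C ∧ k - z ∈ C} x = sInf (Ioi 0 ∩ {t : ℝ | t • k - x ∈ C}) := by
  rw [gauge_def']
  congr 1
  ext r
  refine and_congr_right fun hr => ?_
  have hscale : k - r⁻¹ • x = r⁻¹ • (r • k - x) := by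
    rw [smul_sub, smul_smul, inv_mul_cancel₀ (ne_of_gt hr), one_smul]
  rw [mem_ofPred_eq, hscale, smul_mem_iff_of_pos hcone (inv_pos.2 hr)]
  exact and_iff_right (hadd _ ((smul_mem_iff_of_pos hcone (inv_pos.2 hr)).2 hx) _ hk)

theorem phiF_const_sub_image (C : Set Y) (a k y : Y) :
    phiF ((fun c => a - c) '' C) k y = sInf ((↑) '' {t : ℝ | t • k - (y - a) ∈ C}) := by
  have hinv : Function.Involutive fun c : Y => a - c := sub_sub_cancel a
  unfold phiF
  congr 2
  ext t
  rw [mem_ofPred_eq, mem_image_iff_of_inverse hinv.leftInverse hinv.rightInverse, mem_ofPred_eq]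
  congr! 1
  abel

end Cone

theorem stmt_19_general {Y : Type*} [AddCommGroup Y] [Module ℝ Y]
    (C : Set Y) (hCcv : Convex ℝ C)
    (hcone : ∀ c : ℝ, 0 ≤ c → ∀ x ∈ C, c • x ∈ C)
    (hpointed : ∀ x ∈ C, -x ∈ C → x = 0)
    (hnt₂ : C ≠ Set.univ)
    (k : Y) (hkcore : k ∈ algInterior C) (a : Y) :
    ∀ y : Y, y - a ∈ C →
      ((gauge {z : Y | z + k ∈ C ∧ k - z ∈ C} (y - a) : ℝ) : EReal) =
        phiF ((fun c => a - c) '' C) k y := by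
  intro y hy
  have hadd : ∀ u ∈ C, ∀ v ∈ C, u + v ∈ C := fun _ hu _ hv =>
    hCcv.add_mem_of_smul_mem hcone hu hv
  have hk0 := ne_zero_of_mem_algInterior hcone hnt₂ hkcore
  have hne := exists_smul_sub_mem_of_mem_algInterior hcone hkcore (y - a)
  have hnonneg : ∀ t ∈ {t : ℝ | t • k - (y - a) ∈ C}, 0 ≤ t := fun _ ht =>
    nonneg_of_smul_sub_mem hadd hcone hpointed hkcore.1 hk0 hy ht
  rw [gauge_orderInterval_eq hadd hcone hkcore.1 hy,
    (isUpperSet_setOf_smul_sub_mem hadd hcone hkcore.1 _).csInf_Ioi_inter hne hnonneg,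
    phiF_const_sub_image]
  exact EReal.coe_csInf hne ⟨0, hnonneg⟩

theorem stmt_19 {Y : Type*} [AddCommGroup Y] [Module ℝ Y] [TopologicalSpace Y]
    [IsTopologicalAddGroup Y] [ContinuousSMul ℝ Y]
    (C : Set Y) (hCc : IsClosed C) (hCcv : Convex ℝ C)
    (hcone : ∀ c : ℝ, 0 ≤ c → ∀ x ∈ C, c • x ∈ C)
    (hpointed : ∀ x ∈ C, -x ∈ C → x = 0)
    (hnt₁ : C ≠ {0}) (hnt₂ : C ≠ Set.univ)
    (k : Y) (hkcore : k ∈ algInterior C) (a : Y) :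
    ∀ y : Y, y - a ∈ C →
      ((gauge {z : Y | z + k ∈ C ∧ k - z ∈ C} (y - a) : ℝ) : EReal) =
        phiF ((fun c => a - c) '' C) k y :=
  stmt_19_general C hCcv hcone hpointed hnt₂ k hkcore a
end
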